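/- Let X ∈ {U,D}^n. If for all i, j with |i−j| > n^{0.3} one has |ct_U(i) − ct_U(j) − (i−j)/2| < |i−j|^{0.6}/2, then for every i ≤ n, the distance from i to the position of the last D at or before i satisfies i − pos_D(ct_D(i)) ≤ n^{0.3}. -/
import Mathlib


/-- `ct X b i`: number of occurrences of the letter `b` among positions `1,…,i`
of the word `X` (positions are one-indexed; `true` encodes `D`, `false` encodes `U`). -/
def ct (X : ℕ → Bool) (b : Bool) (i : ℕ) : ℕ :=
  ((Finset.Icc 1 i).filter (fun k => X k = b)).card

/-- `pos X n b k`: the index of the `k`-th occurrence of the letter `b` in the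
word `X` of length `n`, equal to `n` if there are fewer than `k` occurrences;
`pos X n b 0 = 0`. -/
noncomputable def pos (X : ℕ → Bool) (n : ℕ) (b : Bool) (k : ℕ) : ℕ :=
  if k ≤ ct X b n then sInf {j | ct X b j = k} else n

lemma ct_mono (X : ℕ → Bool) (b : Bool) : Monotone (ct X b) := by
  intro i j hij
  exact Finset.card_le_card (Finset.filter_subset_filter _ (Finset.Icc_subset_Icc le_rfl hij))

lemma ct_add (X : ℕ → Bool) (i : ℕ) : ct X true i + ct X false i = i := by
  have := Finset.card_filter_add_card_filter_not (s := Finset.Icc 1 i)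
    (p := fun k => X k = true)
  simp only [Bool.not_eq_true] at this
  simpa [ct, Nat.card_Icc] using this

lemma ct_lt_of_true (X : ℕ → Bool) (j : ℕ) (hj : 1 ≤ j) (hX : X j = true) :
    ct X true (j - 1) < ct X true j := by
  apply Finset.card_lt_card
  constructor
  · exact Finset.filter_subset_filter _ (Finset.Icc_subset_Icc le_rfl (Nat.sub_le j 1))
  · intro hsub
    have hj' : j ∈ (Finset.Icc 1 j).filter (fun k => X k = true) := by
      simp [hj, hX]
    have := hsub hj'
    simp at this
    omega

/-- If `X ∈ {U,D}^n` satisfies the second Petrov condition for the label `U`,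
then for every `i ≤ n` the distance from `i` to the position of the last `D` at
or before `i` is at most `n^{0.3}`. -/
theorem dist_to_last_D_le (n : ℕ) (X : ℕ → Bool)
    (h : ∀ i j : ℕ, i ≤ n → j ≤ n → |(i : ℝ) - j| > (n : ℝ) ^ (0.3 : ℝ) →
      |(ct X false i : ℝ) - ct X false j - ((i : ℝ) - j) / 2| < |(i : ℝ) - j| ^ (0.6 : ℝ) / 2) :
    ∀ i ≤ n, (i : ℝ) - pos X n true (ct X true i) ≤ (n : ℝ) ^ (0.3 : ℝ) := by
  intro i hi
  set k := ct X true i with hk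
  have hkn : k ≤ ct X true n := ct_mono X true hi
  have hpos : pos X n true k = sInf {j | ct X true j = k} := by
    simp [pos, hkn]
  set S : Set ℕ := {j | ct X true j = k} with hS
  have hiS : i ∈ S := rfl
  set p := sInf S with hp
  have hpi : p ≤ i := Nat.sInf_le hiS
  have hpS : p ∈ S := Nat.sInf_mem ⟨i, hiS⟩
  have hctp : ct X true p = k := hpS
  -- all ct true between p and i equal k
  have hctfalse : ct X false i = ct X false p + (i - p) := by
    have h1 := ct_add X i
    have h2 := ct_add X p
    omega
  by_contra hcon
  push_neg at hcon
  rw [hpos] at hcon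
  have hpn : p ≤ n := le_trans hpi hi
  have habs : |(i : ℝ) - p| = (i : ℝ) - p := by
    rw [abs_of_nonneg]
    have : (p : ℝ) ≤ i := Nat.cast_le.mpr hpi
    linarith
  have hgt : |(i : ℝ) - p| > (n : ℝ) ^ (0.3 : ℝ) := by rw [habs]; exact hcon
  have hmain := h i p hi hpn hgt
  have hcast : (ct X false i : ℝ) = ct X false p + ((i : ℝ) - p) := by
    rw [hctfalse]
    push_cast [Nat.cast_sub hpi]
    ring
  rw [hcast, habs] at hmain
  set x : ℝ := (i : ℝ) - p with hx
  have hxpos : x > 0 := lt_of_le_of_lt (Real.rpow_nonneg (Nat.cast_nonneg n) _) hcon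
  have hx1 : 1 ≤ x := by
    have hlt : p < i := by
      rcases lt_or_eq_of_le hpi with h' | h'
      · exact h'
      · exfalso; rw [h'] at hx; simp [hx] at hxpos
    have : ((p : ℝ) + 1) ≤ i := by exact_mod_cast hlt
    simp only [hx]; linarith
  have hpow : x ^ (0.6 : ℝ) ≤ x := by
    calc x ^ (0.6 : ℝ) ≤ x ^ (1 : ℝ) :=
          Real.rpow_le_rpow_of_exponent_le hx1 (by norm_num)
      _ = x := Real.rpow_one x
  have : |ct X false p + x - ct X false p - x / 2| = x / 2 := by
    rw [abs_of_nonneg] <;> linarith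
  rw [this] at hmain
  linarith
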